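/- arXiv:1907.12229 — 5 statements merged into one kernel-verified Lean document; each statement's English description precedes it below -/
import Mathlib

section
/- Let n ≥ 2, let P be an n×n irreducible column-stochastic matrix (nonnegative entries, each column summing to one), and let D = diag(d_1,…,d_n) be a diagonal matrix with all d_i > 0 that is not a scalar multiple of the identity matrix. For α ≥ 0 set M(α) = (1−α)·I + α·P. Then the function α ↦ s(M(α)·D), where s(A) denotes the spectral bound of A (the maximum of the real parts of the eigenvalues of A), is strictly decreasing on (0,∞). -/
open Matrix Filter Set Topology

/-- A square matrix is irreducible if it is not permutation-similar to a nontrivial block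
upper triangular matrix; equivalently, for every nonempty proper subset `S` of indices there
are `i ∈ S` and `j ∉ S` with `A i j ≠ 0`. -/
def IsIrreducibleMatrix {n : ℕ} (A : Matrix (Fin n) (Fin n) ℝ) : Prop :=
  ∀ S : Set (Fin n), S.Nonempty → S ≠ Set.univ → ∃ i ∈ S, ∃ j ∈ Sᶜ, A i j ≠ 0

/-- The spectral bound of a real square matrix: the maximum of the real parts of its
(complex) eigenvalues, i.e. of the roots of its characteristic polynomial over `ℂ`. -/
noncomputable def spectralBound {n : ℕ} (A : Matrix (Fin n) (Fin n) ℝ) : ℝ :=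
  sSup {x : ℝ | ∃ μ : ℂ, ((A.map Complex.ofReal).charpoly).IsRoot μ ∧ μ.re = x}

/-- The spectral radius of a real square matrix: the maximum modulus of its (complex)
eigenvalues, i.e. of the roots of its characteristic polynomial over `ℂ`. -/
noncomputable def specRad {n : ℕ} (A : Matrix (Fin n) (Fin n) ℝ) : ℝ :=
  sSup {x : ℝ | ∃ μ : ℂ, ((A.map Complex.ofReal).charpoly).IsRoot μ ∧ ‖μ‖ = x}

/-!
Since `s(M(α) D) = s(D M(α))` and `D M(α)` is an irreducible Metzler matrix, `s` is a Perron
root with positive left and right eigenvectors. Fix `0 < a < b`, let `r = s(D M(b))` with Perron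
vector `y`. If `r ≤ (1 - a) dᵢ` for some `i` we are done, as `s(D M(a))` exceeds every diagonal
entry of `D M(a)`. Otherwise, solving the eigen-equation for `P y` shows that `y` is a fixed
vector of `diag(κ_b) P`, where `κ_α i = α dᵢ / (r - (1 - α) dᵢ)`, and `r < s(D M(a))` follows
from `1 < s(diag(κ_a) P)`.

The Friedland–Karlin inequality `s(diag(E) A) ≥ s(A) ∏ Eᵢ ^ wᵢ`, with weights `wᵢ = uᵢ yᵢ`
from the Perron vectors of `A = diag(κ_b) P`, is applied twice. With `diag(E) A = P`, whose
spectral bound is `1` since `P` is column-stochastic, it gives `∑ wᵢ log κ_b i ≥ 0`; with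
`diag(E) A = diag(κ_a) P` it reduces `1 < s(diag(κ_a) P)` to
`∑ wᵢ log κ_b i < ∑ wᵢ log κ_a i`. This follows termwise from the growth of
`t ↦ (1 + z / t) ^ t`, strictly where `dᵢ ≠ r`, which happens for some `i` because `D` is not
scalar.
-/
def IsMetzlerMatrix {ι : Type*} (A : Matrix ι ι ℝ) : Prop :=
  ∀ i j, i ≠ j → 0 ≤ A i j

theorem mulVec_nonneg {ι : Type*} [Fintype ι] {A : Matrix ι ι ℝ} {x : ι → ℝ}
    (hA : ∀ i j, 0 ≤ A i j) (hx : 0 ≤ x) : 0 ≤ A *ᵥ x :=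
  fun i => Finset.sum_nonneg fun j _ => mul_nonneg (hA i j) (hx j)

theorem ne_zero_of_forall_pos {ι : Type*} [Nonempty ι] {x : ι → ℝ} (hx : ∀ i, 0 < x i) :
    x ≠ 0 :=
  fun h => (hx (Classical.arbitrary ι)).ne' (congrFun h _)

theorem Matrix.isRoot_charpoly_iff {K ι : Type*} [Field K] [Fintype ι] [DecidableEq ι]
    (B : Matrix ι ι K) (μ : K) : B.charpoly.IsRoot μ ↔ ∃ w ≠ 0, B *ᵥ w = μ • w := by
  rw [Polynomial.IsRoot, eval_charpoly, ← exists_mulVec_eq_zero_iff]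
  simp [sub_mulVec, sub_eq_zero, eq_comm, scalar_apply, funext_iff, smul_eq_mul]

theorem IsMetzlerMatrix.exists_nonneg_add_smul_one {ι : Type*} [Fintype ι] [DecidableEq ι]
    {A : Matrix ι ι ℝ} (hA : IsMetzlerMatrix A) :
    ∃ c : ℝ, ∀ i j, 0 ≤ (A + c • 1) i j := by
  refine ⟨∑ k, |A k k|, fun i j => ?_⟩
  rcases eq_or_ne i j with rfl | hij
  · have := Finset.single_le_sum (fun k _ => abs_nonneg (A k k)) (Finset.mem_univ i)
    simp only [Matrix.add_apply, Matrix.smul_apply, one_apply_eq, smul_eq_mul, mul_one]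
    linarith [neg_abs_le (A i i)]
  · simpa [one_apply_ne hij] using hA i j hij

theorem IsMetzlerMatrix.diagonal_mul {ι : Type*} [Fintype ι] [DecidableEq ι]
    {A : Matrix ι ι ℝ} (hA : IsMetzlerMatrix A) {E : ι → ℝ} (hE : 0 ≤ E) :
    IsMetzlerMatrix (diagonal E * A) := fun i j hij => by
  simpa [Matrix.diagonal_mul] using mul_nonneg (hE i) (hA i j hij)

section Pairing

variable {ι : Type*} [Fintype ι] {A : Matrix ι ι ℝ} {u x : ι → ℝ} {m μ : ℝ}

theorem dotProduct_pos_of_pos_of_nonneg (hu : ∀ i, 0 < u i) (hx : 0 ≤ x) (hx0 : x ≠ 0) :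
    0 < u ⬝ᵥ x := by
  obtain ⟨i, hi⟩ := Function.ne_iff.1 hx0
  exact Finset.sum_pos' (fun j _ => mul_nonneg (hu j).le (hx j))
    ⟨i, Finset.mem_univ i, mul_pos (hu i) ((hx i).lt_of_ne (Ne.symm hi))⟩

theorem le_of_smul_le_mulVec (hu : ∀ i, 0 < u i) (huA : u ᵥ* A = μ • u) (hx : 0 ≤ x)
    (hx0 : x ≠ 0) (h : m • x ≤ A *ᵥ x) : m ≤ μ := by
  have hux := dotProduct_pos_of_pos_of_nonneg hu hx hx0
  refine le_of_mul_le_mul_right ?_ hux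
  calc m * (u ⬝ᵥ x) = u ⬝ᵥ (m • x) := by rw [dotProduct_smul, smul_eq_mul]
    _ ≤ u ⬝ᵥ (A *ᵥ x) := dotProduct_le_dotProduct_of_nonneg_left h fun i => (hu i).le
    _ = μ * (u ⬝ᵥ x) := by rw [dotProduct_mulVec, huA, smul_dotProduct, smul_eq_mul]

theorem lt_of_lt_mulVec [Nonempty ι] (hu : ∀ i, 0 < u i) (huA : u ᵥ* A = μ • u)
    (hx : ∀ i, 0 < x i) (h : ∀ i, m * x i < (A *ᵥ x) i) : m < μ := by
  have hux : 0 < u ⬝ᵥ x :=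
    Finset.sum_pos (fun i _ => mul_pos (hu i) (hx i)) Finset.univ_nonempty
  refine lt_of_mul_lt_mul_right ?_ hux.le
  calc m * (u ⬝ᵥ x) = ∑ i, u i * (m * x i) := by
        rw [dotProduct, Finset.mul_sum]; exact Finset.sum_congr rfl fun i _ => by ring
    _ < ∑ i, u i * (A *ᵥ x) i :=
        Finset.sum_lt_sum_of_nonempty Finset.univ_nonempty fun i _ =>
          mul_lt_mul_of_pos_left (h i) (hu i)
    _ = μ * (u ⬝ᵥ x) := by
        rw [← dotProduct, dotProduct_mulVec, huA, smul_dotProduct, smul_eq_mul]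

theorem eq_of_vecMul_eq_smul_of_mulVec_eq_smul (hu : ∀ i, 0 < u i) (huA : u ᵥ* A = μ • u)
    (hx : 0 ≤ x) (hx0 : x ≠ 0) (hAx : A *ᵥ x = m • x) : m = μ := by
  have h := dotProduct_mulVec u A x
  rw [hAx, huA, dotProduct_smul, smul_dotProduct, smul_eq_mul, smul_eq_mul] at h
  exact mul_right_cancel₀ (dotProduct_pos_of_pos_of_nonneg hu hx hx0).ne' h

end Pairing

namespace IsIrreducibleMatrix

variable {n : ℕ} {A B C : Matrix (Fin n) (Fin n) ℝ}

theorem transpose (hA : IsIrreducibleMatrix A) : IsIrreducibleMatrix Aᵀ := by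
  intro S hS hSu
  obtain ⟨i, hi, j, hj, hij⟩ :=
    hA Sᶜ (Set.nonempty_compl.2 hSu) fun h => hS.ne_empty (compl_univ_iff.1 h)
  exact ⟨j, compl_compl S ▸ hj, i, hi, hij⟩

theorem of_offDiag_ne_zero (hA : IsIrreducibleMatrix A)
    (h : ∀ i j, i ≠ j → A i j ≠ 0 → B i j ≠ 0) : IsIrreducibleMatrix B := by
  intro S hS hSu
  obtain ⟨i, hi, j, hj, hij⟩ := hA S hS hSu
  exact ⟨i, hi, j, hj, h i j (fun h => hj (h ▸ hi)) hij⟩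

theorem diagonal_mul (hA : IsIrreducibleMatrix A) {E : Fin n → ℝ} (hE : ∀ i, E i ≠ 0) :
    IsIrreducibleMatrix (diagonal E * A) :=
  hA.of_offDiag_ne_zero fun i j _ h => by simpa [Matrix.diagonal_mul, hE i] using h

theorem exists_offDiag_ne_zero [Nontrivial (Fin n)] (hA : IsIrreducibleMatrix A) (i : Fin n) :
    ∃ j, j ≠ i ∧ A i j ≠ 0 := by
  obtain ⟨k, hk⟩ := exists_ne i
  obtain ⟨i', rfl, j, hj, hij⟩ :=
    hA {i} (Set.singleton_nonempty i) fun h => hk (Set.eq_univ_iff_forall.1 h k)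
  exact ⟨j, hj, hij⟩

section Positivity

variable {x : Fin n → ℝ}

theorem le_one_add_mulVec (hC : ∀ i j, 0 ≤ C i j) (hx : 0 ≤ x) : x ≤ (1 + C) *ᵥ x := by
  rw [add_mulVec, one_mulVec]
  exact le_add_of_nonneg_right (mulVec_nonneg hC hx)

/-- The zero entries of `x` form a proper nonempty set, which `C` connects to a positive entry. -/
theorem card_pos_lt_card_pos_one_add_mulVec (hC : ∀ i j, 0 ≤ C i j)
    (hirr : IsIrreducibleMatrix C) (hx : 0 ≤ x) (hpos : ∃ i, 0 < x i) (hzero : ∃ i, x i = 0) :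
    (Finset.univ.filter fun i => 0 < x i).card <
      (Finset.univ.filter fun i => 0 < ((1 + C) *ᵥ x) i).card := by
  obtain ⟨i, hi, j, hj, hij⟩ := hirr {i | x i = 0} hzero
    fun h => by obtain ⟨k, hk⟩ := hpos; exact hk.ne' (Set.eq_univ_iff_forall.1 h k)
  have hxj : 0 < x j := (hx j).lt_of_ne (Ne.symm hj)
  refine Finset.card_lt_card (Finset.ssubset_iff_of_subset ?_ |>.2 ⟨i, ?_, ?_⟩)
  · intro k
    simp only [Finset.mem_filter, Finset.mem_univ, true_and]
    exact fun hk => hk.trans_le (le_one_add_mulVec hC hx k)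
  · rw [Finset.mem_filter, add_mulVec, one_mulVec, Pi.add_apply, show x i = 0 from hi, zero_add]
    refine ⟨Finset.mem_univ i, ?_⟩
    exact Finset.sum_pos' (fun k _ => mul_nonneg (hC i k) (hx k))
      ⟨j, Finset.mem_univ j, mul_pos ((hC i j).lt_of_ne (Ne.symm hij)) hxj⟩
  · simp [show x i = 0 from hi]

/-- Each application of `1 + C` creates a positive entry until all entries are positive. -/
theorem one_add_pow_mulVec_pos (hC : ∀ i j, 0 ≤ C i j) (hirr : IsIrreducibleMatrix C)
    (hx : 0 ≤ x) (hx0 : x ≠ 0) (i : Fin n) : 0 < ((1 + C) ^ (n - 1) *ᵥ x) i := by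
  set y : ℕ → Fin n → ℝ := fun k => (1 + C) ^ k *ᵥ x
  have hy_succ (k : ℕ) : y (k + 1) = (1 + C) *ᵥ y k := by
    simp only [y, pow_succ', mulVec_mulVec]
  have hy_nonneg (k : ℕ) : 0 ≤ y k := by
    induction k with
    | zero => simpa [y] using hx
    | succ k ih => exact hy_succ k ▸ ih.trans (le_one_add_mulVec hC ih)
  have hcard (k : ℕ) : min n (k + 1) ≤ (Finset.univ.filter fun i => 0 < y k i).card := by
    induction k with
    | zero =>
      obtain ⟨j, hj⟩ := Function.ne_iff.1 hx0
      have : 0 < (Finset.univ.filter fun i => 0 < y 0 i).card :=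
        Finset.card_pos.2 ⟨j, by simpa [y] using (hx j).lt_of_ne (Ne.symm hj)⟩
      omega
    | succ k ih =>
      rw [hy_succ]
      by_cases hzero : ∃ i, y k i = 0
      · have hn : 0 < n := hzero.choose.pos
        have hpos : ∃ i, 0 < y k i := by
          obtain ⟨j, hj⟩ := Finset.card_pos.1
            (show 0 < (Finset.univ.filter fun i => 0 < y k i).card by omega)
          exact ⟨j, (Finset.mem_filter.1 hj).2⟩
        have := card_pos_lt_card_pos_one_add_mulVec hC hirr (hy_nonneg k) hpos hzero
        omega
      · push Not at hzero
        have hall : ∀ i, 0 < ((1 + C) *ᵥ y k) i := fun i =>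
          ((hy_nonneg k i).lt_of_ne (hzero i).symm).trans_le
            (le_one_add_mulVec hC (hy_nonneg k) i)
        simp [hall]
  have hfull : (Finset.univ.filter fun i => 0 < y (n - 1) i) = Finset.univ := by
    apply Finset.eq_univ_of_card
    have := hcard (n - 1)
    have := Finset.card_filter_le Finset.univ fun i => 0 < y (n - 1) i
    simp only [Finset.card_univ, Fintype.card_fin] at *
    omega
  simpa using Finset.ext_iff.1 hfull i

theorem pos_of_mulVec_eq_smul (hC : ∀ i j, 0 ≤ C i j) (hirr : IsIrreducibleMatrix C)
    {r : ℝ} (hx : 0 ≤ x) (hx0 : x ≠ 0) (hCx : C *ᵥ x = r • x) (i : Fin n) : 0 < x i := by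
  have hpow (k : ℕ) : (1 + C) ^ k *ᵥ x = (1 + r) ^ k • x := by
    induction k with
    | zero => simp
    | succ k ih =>
      rw [pow_succ', ← mulVec_mulVec, ih, mulVec_smul, add_mulVec, one_mulVec, hCx, pow_succ']
      module
  have := one_add_pow_mulVec_pos hC hirr hx hx0 i
  rw [hpow, Pi.smul_apply, smul_eq_mul] at this
  exact (hx i).lt_of_ne fun h => by simp [← h] at this

end Positivity

/-- Maximise the Collatz–Wielandt function `y ↦ minᵢ (C y)ᵢ / yᵢ` over the compact set
`(1 + C) ^ (n - 1) '' stdSimplex`, on which all vectors are strictly positive. -/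
theorem exists_pos_mulVec_eq_smul [Nonempty (Fin n)] (hC : ∀ i j, 0 ≤ C i j)
    (hirr : IsIrreducibleMatrix C) :
    ∃ (r : ℝ) (v : Fin n → ℝ), (∀ i, 0 < v i) ∧ C *ᵥ v = r • v := by
  set T := (1 + C) ^ (n - 1)
  have hT {x : Fin n → ℝ} (hx : 0 ≤ x) (hx0 : x ≠ 0) (i : Fin n) : 0 < (T *ᵥ x) i :=
    one_add_pow_mulVec_pos hC hirr hx hx0 i
  have hTC : T * C = C * T := ((Commute.one_left C).add_left (Commute.refl C)).pow_left _
  set K := (T *ᵥ ·) '' stdSimplex ℝ (Fin n)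
  have hKpos : ∀ y ∈ K, ∀ i, 0 < y i := by
    rintro _ ⟨x, hx, rfl⟩ i
    exact hT hx.1 (fun h => by simpa [h] using hx.2) i
  set g : (Fin n → ℝ) → ℝ :=
    fun y => Finset.univ.inf' Finset.univ_nonempty fun i => (C *ᵥ y) i / y i
  have hg_smul {c : ℝ} (hc : 0 < c) (y : Fin n → ℝ) : g (c • y) = g y := by
    simp only [g, mulVec_smul, Pi.smul_apply, smul_eq_mul, mul_div_mul_left _ _ hc.ne']
  have hgK : ContinuousOn g K :=
    ContinuousOn.finset_inf'_apply _ fun i _ => ContinuousOn.div (by fun_prop) (by fun_prop)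
      fun y hy => (hKpos y hy i).ne'
  obtain ⟨v, hvK, hvmax⟩ :=
    ((isCompact_stdSimplex ℝ (Fin n)).image (by fun_prop)).exists_isMaxOn
      ⟨_, _, single_mem_stdSimplex ℝ (Classical.arbitrary _), rfl⟩ hgK
  have hv := hKpos v hvK
  set r := g v
  have hrv : r • v ≤ C *ᵥ v := fun i =>
    (le_div_iff₀ (hv i)).1 (Finset.inf'_le (fun i => (C *ᵥ v) i / v i) (Finset.mem_univ i))
  refine ⟨r, v, hv, ?_⟩
  by_contra hne
  have hz : 0 ≤ C *ᵥ v - r • v := sub_nonneg.2 hrv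
  have hz0 : C *ᵥ v - r • v ≠ 0 := sub_ne_zero.2 hne
  -- `T *ᵥ v`, normalised into `K`, would beat the maximiser `v`
  have hlt : r < g (T *ᵥ v) := by
    refine (Finset.lt_inf'_iff _).2 fun i _ =>
      (lt_div_iff₀ (hT (fun j => (hv j).le) (ne_zero_of_forall_pos hv) i)).2 ?_
    have := hT hz hz0 i
    rw [mulVec_sub, mulVec_mulVec, hTC, ← mulVec_mulVec, mulVec_smul] at this
    simpa [sub_pos] using this
  set s := ∑ i, v i
  have hs : 0 < s := Finset.sum_pos (fun i _ => hv i) Finset.univ_nonempty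
  have hmem : s⁻¹ • (T *ᵥ v) ∈ K := by
    refine ⟨s⁻¹ • v, ⟨fun i => mul_nonneg (inv_nonneg.2 hs.le) (hv i).le, ?_⟩,
      (mulVec_smul T s⁻¹ v)⟩
    simp [← Finset.mul_sum, s, hs.ne']
  exact (hlt.trans_eq (hg_smul (inv_pos.2 hs) _).symm).not_ge (hvmax hmem)

theorem exists_pos_vecMul_eq_smul [Nonempty (Fin n)] (hC : ∀ i j, 0 ≤ C i j)
    (hirr : IsIrreducibleMatrix C) :
    ∃ (r : ℝ) (u : Fin n → ℝ), (∀ i, 0 < u i) ∧ u ᵥ* C = r • u := by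
  obtain ⟨r, u, hu, huC⟩ :=
    exists_pos_mulVec_eq_smul (C := Cᵀ) (fun i j => hC j i) hirr.transpose
  exact ⟨r, u, hu, by rwa [mulVec_transpose] at huC⟩

end IsIrreducibleMatrix

section SpectralBound

variable {n : ℕ} {A : Matrix (Fin n) (Fin n) ℝ} {μ : ℝ}

theorem spectralBound_mul_comm (A B : Matrix (Fin n) (Fin n) ℝ) :
    spectralBound (A * B) = spectralBound (B * A) := by
  have hmap (A B : Matrix (Fin n) (Fin n) ℝ) :
      (A * B).map Complex.ofReal = A.map Complex.ofReal * B.map Complex.ofReal :=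
    Matrix.map_mul (f := Complex.ofRealHom)
  simp only [spectralBound, hmap, charpoly_mul_comm]

theorem bddAbove_re_roots (A : Matrix (Fin n) (Fin n) ℝ) :
    BddAbove {x : ℝ | ∃ z : ℂ, ((A.map Complex.ofReal).charpoly).IsRoot z ∧ z.re = x} :=
  (((Polynomial.finite_setOfPred_isRoot (charpoly_monic _).ne_zero).image Complex.re).subset
    (by rintro _ ⟨z, hz, rfl⟩; exact ⟨z, hz, rfl⟩)).bddAbove

theorem re_le_spectralBound {z : ℂ} (hz : ((A.map Complex.ofReal).charpoly).IsRoot z) :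
    z.re ≤ spectralBound A :=
  le_csSup (bddAbove_re_roots A) ⟨z, hz, rfl⟩

theorem isRoot_charpoly_map_ofReal {v : Fin n → ℝ} (hv : v ≠ 0) (hAv : A *ᵥ v = μ • v) :
    ((A.map Complex.ofReal).charpoly).IsRoot μ := by
  refine (isRoot_charpoly_iff _ _).2 ⟨Complex.ofReal ∘ v, fun h => hv ?_, funext fun i => ?_⟩
  · exact funext fun i => Complex.ofReal_injective (congrFun h i)
  · have := congrFun hAv i
    simp only [mulVec, dotProduct, Pi.smul_apply, smul_eq_mul] at this ⊢
    simp only [map_apply, Function.comp_apply]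
    exact_mod_cast this

theorem le_spectralBound_of_mulVec_eq_smul {v : Fin n → ℝ} (hv : v ≠ 0)
    (hAv : A *ᵥ v = μ • v) : μ ≤ spectralBound A := by
  simpa using re_le_spectralBound (isRoot_charpoly_map_ofReal hv hAv)

/-- Shift `A` to a nonnegative `B` and test `B` on the moduli `‖wᵢ‖` of an eigenvector `w`. -/
theorem IsMetzlerMatrix.re_le_of_vecMul_eq_smul (hA : IsMetzlerMatrix A) {u : Fin n → ℝ}
    (hu : ∀ i, 0 < u i) (huA : u ᵥ* A = μ • u) {z : ℂ}
    (hz : ((A.map Complex.ofReal).charpoly).IsRoot z) : z.re ≤ μ := by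
  obtain ⟨w, hw0, hw⟩ := (isRoot_charpoly_iff _ _).1 hz
  obtain ⟨c, hc⟩ := hA.exists_nonneg_add_smul_one
  set B := A + c • 1
  have hBw (i : Fin n) : (z + c) * w i = ∑ j, (B i j : ℂ) * w j := by
    have hB : B.map Complex.ofReal = A.map Complex.ofReal + (c : ℂ) • 1 := by
      ext i j
      by_cases hij : i = j <;> simp [B, hij]
    have := congrFun (congrArg (· *ᵥ w) hB) i
    simp only [add_mulVec, smul_mulVec, one_mulVec, hw] at this
    simpa [add_mul, mulVec, dotProduct] using this.symm
  set x : Fin n → ℝ := fun i => ‖w i‖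
  have hx : (z.re + c) • x ≤ B *ᵥ x := fun i =>
    calc (z.re + c) * ‖w i‖ ≤ ‖z + c‖ * ‖w i‖ := by
          gcongr; simpa using Complex.re_le_norm (z + c)
      _ = ‖∑ j, (B i j : ℂ) * w j‖ := by rw [← norm_mul, hBw]
      _ ≤ ∑ j, B i j * ‖w j‖ := (norm_sum_le _ _).trans_eq <|
          Finset.sum_congr rfl fun j _ => by
            rw [norm_mul, Complex.norm_real, Real.norm_of_nonneg (hc i j)]
  have huB : u ᵥ* B = (μ + c) • u := by
    rw [vecMul_add, huA, vecMul_smul, vecMul_one, add_smul]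
  have := le_of_smul_le_mulVec hu huB (fun i => norm_nonneg (w i))
    (fun h => hw0 (funext fun i => norm_eq_zero.1 (congrFun h i))) hx
  linarith

theorem IsMetzlerMatrix.spectralBound_eq (hA : IsMetzlerMatrix A) {u v : Fin n → ℝ}
    (hu : ∀ i, 0 < u i) (huA : u ᵥ* A = μ • u) (hv : v ≠ 0) (hAv : A *ᵥ v = μ • v) :
    spectralBound A = μ :=
  le_antisymm (csSup_le ⟨μ, μ, isRoot_charpoly_map_ofReal hv hAv, Complex.ofReal_re μ⟩
      fun _ ⟨_, hz, hx⟩ => hx ▸ hA.re_le_of_vecMul_eq_smul hu huA hz)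
    (le_spectralBound_of_mulVec_eq_smul hv hAv)

end SpectralBound

namespace IsIrreducibleMatrix

variable {n : ℕ} [Nonempty (Fin n)] {A S : Matrix (Fin n) (Fin n) ℝ} {μ : ℝ}

theorem exists_perron_vectors (hirr : IsIrreducibleMatrix A) (hA : IsMetzlerMatrix A) :
    ∃ v u : Fin n → ℝ, (∀ i, 0 < v i) ∧ (∀ i, 0 < u i) ∧
      A *ᵥ v = spectralBound A • v ∧ u ᵥ* A = spectralBound A • u := by
  obtain ⟨c, hc⟩ := hA.exists_nonneg_add_smul_one
  have hirrB : IsIrreducibleMatrix (A + c • 1) :=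
    hirr.of_offDiag_ne_zero fun i j hij h => by simpa [one_apply_ne hij] using h
  obtain ⟨r, v, hv, hBv⟩ := hirrB.exists_pos_mulVec_eq_smul hc
  obtain ⟨r', u, hu, huB⟩ := hirrB.exists_pos_vecMul_eq_smul hc
  obtain rfl := eq_of_vecMul_eq_smul_of_mulVec_eq_smul hu huB (fun i => (hv i).le)
    (ne_zero_of_forall_pos hv) hBv
  have hAv : A *ᵥ v = (r - c) • v := by
    rw [sub_smul, ← hBv, add_mulVec, smul_mulVec, one_mulVec, add_sub_cancel_right]
  have huA : u ᵥ* A = (r - c) • u := by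
    rw [sub_smul, ← huB, vecMul_add, vecMul_smul, vecMul_one, add_sub_cancel_right]
  rw [hA.spectralBound_eq hu huA (ne_zero_of_forall_pos hv) hAv]
  exact ⟨v, u, hv, hu, hAv, huA⟩

theorem spectralBound_eq_of_vecMul_eq_smul (hirr : IsIrreducibleMatrix A)
    (hA : IsMetzlerMatrix A) {u : Fin n → ℝ} (hu : ∀ i, 0 < u i) (huA : u ᵥ* A = μ • u) :
    spectralBound A = μ := by
  obtain ⟨v, -, hv, -, hAv, -⟩ := hirr.exists_perron_vectors hA
  exact eq_of_vecMul_eq_smul_of_mulVec_eq_smul hu huA (fun i => (hv i).le)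
    (ne_zero_of_forall_pos hv) hAv

theorem le_spectralBound_of_smul_le_mulVec (hirr : IsIrreducibleMatrix A)
    (hA : IsMetzlerMatrix A) {x : Fin n → ℝ} (hx : 0 ≤ x) (hx0 : x ≠ 0)
    (h : μ • x ≤ A *ᵥ x) :
    μ ≤ spectralBound A := by
  obtain ⟨-, u, -, hu, -, huA⟩ := hirr.exists_perron_vectors hA
  exact le_of_smul_le_mulVec hu huA hx hx0 h

theorem lt_spectralBound_of_lt_mulVec (hirr : IsIrreducibleMatrix A) (hA : IsMetzlerMatrix A)
    {x : Fin n → ℝ} (hx : ∀ i, 0 < x i) (h : ∀ i, μ * x i < (A *ᵥ x) i) :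
    μ < spectralBound A := by
  obtain ⟨-, u, -, hu, -, huA⟩ := hirr.exists_perron_vectors hA
  exact lt_of_lt_mulVec hu huA hx h

theorem apply_lt_spectralBound [Nontrivial (Fin n)] (hirr : IsIrreducibleMatrix A)
    (hA : IsMetzlerMatrix A) (i : Fin n) : A i i < spectralBound A := by
  obtain ⟨v, -, hv, -, hAv, -⟩ := hirr.exists_perron_vectors hA
  obtain ⟨j, hji, hij⟩ := hirr.exists_offDiag_ne_zero i
  have hsum : A i i * v i + A i j * v j ≤ (A *ᵥ v) i := by
    rw [← Finset.sum_pair (f := fun k => A i k * v k) hji.symm]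
    refine Finset.sum_le_sum_of_subset_of_nonneg (Finset.subset_univ _) fun k _ hk => ?_
    exact mul_nonneg (hA i k fun h => hk (h ▸ Finset.mem_insert_self _ _)) (hv k).le
  have hpos : 0 < A i j * v j := mul_pos ((hA i j hji.symm).lt_of_ne (Ne.symm hij)) (hv j)
  rw [hAv, Pi.smul_apply, smul_eq_mul] at hsum
  exact lt_of_mul_lt_mul_right (by linarith) (hv i).le

/-- Shifted by its minimum, `z` becomes a nonnegative eigenvector with a zero entry. -/
theorem eq_const_of_mulVec_eq_self (hS : ∀ i j, 0 ≤ S i j) (hirr : IsIrreducibleMatrix S)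
    (hrow : S *ᵥ 1 = 1) {z : Fin n → ℝ} (hz : S *ᵥ z = z) : ∃ c : ℝ, z = c • 1 := by
  obtain ⟨i₀, -, hi₀⟩ := Finset.exists_min_image Finset.univ z Finset.univ_nonempty
  refine ⟨z i₀, sub_eq_zero.1 ?_⟩
  by_contra hne
  have hSy : S *ᵥ (z - z i₀ • 1) = (1 : ℝ) • (z - z i₀ • 1) := by
    rw [mulVec_sub, mulVec_smul, hz, hrow, one_smul]
  have := hirr.pos_of_mulVec_eq_smul hS
    (fun i => sub_nonneg.2 (by simpa using hi₀ i (Finset.mem_univ i))) hne hSy i₀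
  simp at this

/-- The kernel of `1 - S` is the line of constants, so its range is a hyperplane, which must be
the orthogonal complement of the stationary vector `w`. -/
theorem exists_sub_mulVec_eq (hS : ∀ i j, 0 ≤ S i j) (hirr : IsIrreducibleMatrix S)
    (hrow : S *ᵥ 1 = 1) {w : Fin n → ℝ} (hw0 : w ≠ 0) (hwS : w ᵥ* S = w)
    {x : Fin n → ℝ} (hx : w ⬝ᵥ x = 0) : ∃ g, g - S *ᵥ g = x := by
  set L := toLin' (1 - S)
  have hL (g : Fin n → ℝ) : L g = g - S *ᵥ g := by simp [L]
  have hker : LinearMap.ker L = Submodule.span ℝ {1} := by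
    refine le_antisymm (fun z hz => ?_) ((Submodule.span_singleton_le_iff_mem _ _).2 ?_)
    · obtain ⟨c, rfl⟩ := eq_const_of_mulVec_eq_self hS hirr hrow
        (sub_eq_zero.1 ((hL z).symm.trans hz)).symm
      exact Submodule.smul_mem _ c (Submodule.mem_span_singleton_self 1)
    · simp [LinearMap.mem_ker, hL, hrow]
  set φ := dotProductEquiv ℝ (Fin n) w
  have hφ : φ ≠ 0 := (LinearEquiv.map_ne_zero_iff _).2 hw0
  have hle : LinearMap.range L ≤ LinearMap.ker φ := by
    rintro _ ⟨g, rfl⟩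
    simp [φ, hL, dotProduct_sub, dotProduct_mulVec, hwS]
  have hrange : LinearMap.range L = LinearMap.ker φ := by
    refine Submodule.eq_of_le_of_finrank_eq hle ?_
    have h₁ := L.finrank_range_add_finrank_ker
    have h₂ := Module.Dual.finrank_ker_add_one_of_ne_zero hφ
    rw [hker, finrank_span_singleton one_ne_zero] at h₁
    omega
  obtain ⟨g, hg⟩ := hrange ▸ (show x ∈ LinearMap.ker φ by simpa [φ] using hx)
  exact ⟨g, (hL g).symm.trans hg⟩

end IsIrreducibleMatrix

section DoobTransform

variable {ι : Type*} {A : Matrix ι ι ℝ} {u v : ι → ℝ}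

noncomputable def doobTransform (A : Matrix ι ι ℝ) (v : ι → ℝ) : Matrix ι ι ℝ :=
  of fun i j => A i j * v j / v i

theorem doobTransform_nonneg (hA : ∀ i j, 0 ≤ A i j) (hv : ∀ i, 0 < v i) (i j : ι) :
    0 ≤ doobTransform A v i j :=
  div_nonneg (mul_nonneg (hA i j) (hv j).le) (hv i).le

theorem mul_doobTransform_mulVec [Fintype ι] (hv : ∀ i, 0 < v i) (f : ι → ℝ) (i : ι) :
    v i * (doobTransform A v *ᵥ f) i = (A *ᵥ (v * f)) i := by
  simp only [mulVec, dotProduct, doobTransform, of_apply, Finset.mul_sum, Pi.mul_apply]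
  exact Finset.sum_congr rfl fun j _ => by field_simp [(hv i).ne']

theorem doobTransform_mulVec_one [Fintype ι] (hv : ∀ i, 0 < v i) (hAv : A *ᵥ v = v) :
    doobTransform A v *ᵥ 1 = 1 := funext fun i => by
  have := mul_doobTransform_mulVec (A := A) hv 1 i
  rw [mul_one, hAv] at this
  simpa [(hv i).ne'] using this

theorem vecMul_doobTransform [Fintype ι] (hv : ∀ i, 0 < v i) (huA : u ᵥ* A = u) :
    (u * v) ᵥ* doobTransform A v = u * v := funext fun j => by
  simp only [vecMul, dotProduct, doobTransform, of_apply, Pi.mul_apply]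
  rw [← congrFun huA j, vecMul, dotProduct, Finset.sum_mul]
  exact Finset.sum_congr rfl fun i _ => by field_simp [(hv i).ne']

theorem IsIrreducibleMatrix.doobTransform {n : ℕ} {A : Matrix (Fin n) (Fin n) ℝ}
    (hA : IsIrreducibleMatrix A) {v : Fin n → ℝ} (hv : ∀ i, 0 < v i) :
    IsIrreducibleMatrix (doobTransform A v) :=
  hA.of_offDiag_ne_zero fun i j _ h => div_ne_zero (mul_ne_zero h (hv j).ne') (hv i).ne'

end DoobTransform

namespace IsIrreducibleMatrix

variable {n : ℕ} [Nonempty (Fin n)] {A : Matrix (Fin n) (Fin n) ℝ}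

/-- The Friedland–Karlin inequality. The test vector is `yᵢ = vᵢ exp gᵢ`, where `g` solves the
Poisson equation of `doobTransform A v` for the centred `log E`; Jensen's inequality for `exp`
then gives `exp m • y ≤ (diagonal E * A) *ᵥ y`. -/
theorem exp_le_spectralBound_diagonal_mul (hA : ∀ i j, 0 ≤ A i j)
    (hirr : IsIrreducibleMatrix A) {u v : Fin n → ℝ} (hu : ∀ i, 0 < u i) (hv : ∀ i, 0 < v i)
    (huA : u ᵥ* A = u) (hAv : A *ᵥ v = v) {E : Fin n → ℝ} (hE : ∀ i, 0 < E i) :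
    Real.exp ((∑ i, u i * v i * Real.log (E i)) / ∑ i, u i * v i) ≤
      spectralBound (diagonal E * A) := by
  set S := _root_.doobTransform A v
  have hS := doobTransform_nonneg hA hv
  have hZ : 0 < ∑ i, u i * v i :=
    Finset.sum_pos (fun i _ => mul_pos (hu i) (hv i)) Finset.univ_nonempty
  set m := (∑ i, u i * v i * Real.log (E i)) / ∑ i, u i * v i
  set x : Fin n → ℝ := fun i => Real.log (E i) - m
  have hx : (u * v) ⬝ᵥ x = 0 := by
    simp only [x, dotProduct, Pi.mul_apply, mul_sub, Finset.sum_sub_distrib, ← Finset.sum_mul,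
      m]
    field_simp
    ring
  obtain ⟨g, hg⟩ := (hirr.doobTransform hv).exists_sub_mulVec_eq hS
    (doobTransform_mulVec_one hv hAv) (ne_zero_of_forall_pos fun i => mul_pos (hu i) (hv i))
    (vecMul_doobTransform hv huA) hx
  have hjensen i : Real.exp (g i - x i) ≤ (S *ᵥ (Real.exp ∘ g)) i := by
    have hrow : ∑ j, S i j = 1 := by
      simpa [mulVec, dotProduct] using congrFun (doobTransform_mulVec_one hv hAv) i
    have hSg : (S *ᵥ g) i = g i - x i := by rw [← hg, Pi.sub_apply, sub_sub_cancel]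
    simpa [← hSg, mulVec, dotProduct] using convexOn_exp.map_sum_le (t := Finset.univ)
      (fun j _ => hS i j) hrow fun j _ => Set.mem_univ (g j)
  set y := v * (Real.exp ∘ g)
  have hy i : 0 < y i := mul_pos (hv i) (Real.exp_pos _)
  refine (hirr.diagonal_mul fun i => (hE i).ne').le_spectralBound_of_smul_le_mulVec
    (IsMetzlerMatrix.diagonal_mul (fun i j _ => hA i j) fun i => (hE i).le) (fun i => (hy i).le)
    (ne_zero_of_forall_pos hy) fun i => ?_
  rw [← mulVec_mulVec, mulVec_diagonal, ← mul_doobTransform_mulVec hv, Pi.smul_apply,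
    smul_eq_mul]
  calc Real.exp m * y i = E i * (v i * Real.exp (g i - x i)) := by
        simp only [y, x, Pi.mul_apply, Function.comp_apply, Real.exp_sub, Real.exp_log (hE i),
          sub_sub_eq_add_sub, Real.exp_add]
        field_simp [(hE i).ne']
    _ ≤ E i * (v i * (S *ᵥ (Real.exp ∘ g)) i) := by
        gcongr
        · exact (hE i).le
        · exact (hv i).le
        · exact hjensen i

end IsIrreducibleMatrix

/-- `(1 + z / t) ^ t` increases with `t`: Bernoulli's inequality with exponent `b / a`. -/
theorem mul_log_one_add_div_lt_mul_log_one_add_div {a b z : ℝ} (ha : 0 < a) (hab : a < b)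
    (hz : 0 < 1 + z / a) (hz0 : z ≠ 0) :
    a * Real.log (1 + z / a) < b * Real.log (1 + z / b) := by
  have hb : 0 < b := ha.trans hab
  have hzb : 0 < 1 + z / b := by
    have : 1 + z / b = a / b * (1 + z / a) + (1 - a / b) := by field_simp; ring
    rw [this]
    have : a / b < 1 := (div_lt_one hb).2 hab
    positivity
  have hber := one_add_mul_self_lt_rpow_one_add (by linarith [hzb] : -1 ≤ z / b)
    (div_ne_zero hz0 hb.ne') ((one_lt_div ha).2 hab)
  rw [show b / a * (z / b) = z / a by field_simp] at hber
  have := Real.log_lt_log hz hber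
  rw [Real.log_rpow hzb] at this
  calc a * Real.log (1 + z / a) < a * (b / a * Real.log (1 + z / b)) := by gcongr
    _ = b * Real.log (1 + z / b) := by field_simp

section Karlin

variable {n : ℕ} {P : Matrix (Fin n) (Fin n) ℝ} {d : Fin n → ℝ} {r α a b : ℝ} {i : Fin n}

/-- The scaling that turns `(diagonal d * ((1 - α) • 1 + α • P)) *ᵥ y = r • y` into
`(diagonal (karlinWeight d r α) * P) *ᵥ y = y` (see `diagonal_mul_mix_mulVec_apply`). -/
noncomputable def karlinWeight (d : Fin n → ℝ) (r α : ℝ) (i : Fin n) : ℝ :=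
  α * d i / (r - (1 - α) * d i)

theorem karlinWeight_pos (hd : ∀ i, 0 < d i) (hα : 0 < α) (hr : ∀ i, (1 - α) * d i < r)
    (i : Fin n) : 0 < karlinWeight d r α i :=
  div_pos (mul_pos hα (hd i)) (sub_pos.2 (hr i))

theorem log_karlinWeight (hdi : d i ≠ 0) (hα : α ≠ 0) :
    Real.log (karlinWeight d r α i) = -Real.log (1 + (r - d i) / d i / α) := by
  rw [← Real.log_inv, karlinWeight]
  congr 1
  field_simp
  ring

theorem isMetzler_diagonal_mul_mix (hPnn : ∀ i j, 0 ≤ P i j) (hd : ∀ i, 0 < d i)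
    (hα : 0 ≤ α) : IsMetzlerMatrix (diagonal d * ((1 - α) • 1 + α • P)) :=
  IsMetzlerMatrix.diagonal_mul (A := (1 - α) • 1 + α • P)
    (fun i j hij => by simpa [one_apply_ne hij] using mul_nonneg hα (hPnn i j))
    fun i => (hd i).le

theorem isIrreducible_diagonal_mul_mix (hPirr : IsIrreducibleMatrix P) (hd : ∀ i, 0 < d i)
    (hα : 0 < α) : IsIrreducibleMatrix (diagonal d * ((1 - α) • 1 + α • P)) :=
  (hPirr.of_offDiag_ne_zero fun i j hij h => by simp [one_apply_ne hij, hα.ne', h]).diagonal_mul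
    fun i => (hd i).ne'

theorem diagonal_mul_mix_mulVec_apply (hr : r - (1 - α) * d i ≠ 0) (y : Fin n → ℝ) :
    ((diagonal d * ((1 - α) • 1 + α • P)) *ᵥ y) i =
      r * y i +
        (r - (1 - α) * d i) * (((diagonal (karlinWeight d r α) * P) *ᵥ y) i - y i) := by
  simp only [← mulVec_mulVec, mulVec_diagonal, add_mulVec, smul_mulVec, one_mulVec,
    Pi.add_apply, Pi.smul_apply, smul_eq_mul, karlinWeight]
  linear_combination (-(P *ᵥ y) i) * mul_div_cancel₀ (α * d i) hr

theorem one_sub_mul_lt_spectralBound [Nontrivial (Fin n)] (hPnn : ∀ i j, 0 ≤ P i j)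
    (hPirr : IsIrreducibleMatrix P) (hd : ∀ i, 0 < d i) (hα : 0 < α) (i : Fin n) :
    (1 - α) * d i < spectralBound (diagonal d * ((1 - α) • 1 + α • P)) := by
  refine lt_of_le_of_lt ?_ ((isIrreducible_diagonal_mul_mix hPirr hd hα).apply_lt_spectralBound
    (isMetzler_diagonal_mul_mix hPnn hd hα.le) i)
  have := mul_nonneg (mul_nonneg (hd i).le hα.le) (hPnn i i)
  simp only [Matrix.diagonal_mul, Matrix.add_apply, Matrix.smul_apply, one_apply_eq, smul_eq_mul]
  nlinarith

theorem mul_log_karlinWeight_lt (hdi : 0 < d i) (ha : 0 < a) (hab : a < b)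
    (hr : (1 - a) * d i < r) (hri : d i ≠ r) :
    b * Real.log (karlinWeight d r b i) < a * Real.log (karlinWeight d r a i) := by
  have hz : 0 < 1 + (r - d i) / d i / a := by
    rw [show 1 + (r - d i) / d i / a = (r - (1 - a) * d i) / (a * d i) by field_simp; ring]
    exact div_pos (sub_pos.2 hr) (mul_pos ha hdi)
  rw [log_karlinWeight hdi.ne' ha.ne', log_karlinWeight hdi.ne' (ha.trans hab).ne']
  linarith [mul_log_one_add_div_lt_mul_log_one_add_div ha hab hz
    (div_ne_zero (sub_ne_zero.2 hri.symm) hdi.ne')]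

theorem mul_log_karlinWeight_le (hdi : 0 < d i) (ha : 0 < a) (hab : a < b)
    (hr : (1 - a) * d i < r) :
    b * Real.log (karlinWeight d r b i) ≤ a * Real.log (karlinWeight d r a i) := by
  rcases eq_or_ne (d i) r with h | h
  · simp [log_karlinWeight hdi.ne' ha.ne', log_karlinWeight hdi.ne' (ha.trans hab).ne', ← h]
  · exact (mul_log_karlinWeight_lt hdi ha hab hr h).le

/-- Termwise `b log κ_b ≤ a log κ_a`, strictly where `dᵢ ≠ r`. -/
theorem sum_mul_log_karlinWeight_lt {w : Fin n → ℝ} (hw : ∀ i, 0 < w i) (hd : ∀ i, 0 < d i)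
    (ha : 0 < a) (hab : a < b) (hr : ∀ i, (1 - a) * d i < r) (hdr : ∃ i, d i ≠ r)
    (h0 : 0 ≤ ∑ i, w i * Real.log (karlinWeight d r b i)) :
    ∑ i, w i * Real.log (karlinWeight d r b i) <
      ∑ i, w i * Real.log (karlinWeight d r a i) := by
  obtain ⟨i₀, hi₀⟩ := hdr
  have hlt : b * ∑ i, w i * Real.log (karlinWeight d r b i) <
      a * ∑ i, w i * Real.log (karlinWeight d r a i) := by
    simp only [Finset.mul_sum, mul_left_comm _ (w _)]
    exact Finset.sum_lt_sum (fun i _ =>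
        mul_le_mul_of_nonneg_left (mul_log_karlinWeight_le (hd i) ha hab (hr i)) (hw i).le)
      ⟨i₀, Finset.mem_univ _, mul_lt_mul_of_pos_left
        (mul_log_karlinWeight_lt (hd i₀) ha hab (hr i₀) hi₀) (hw i₀)⟩
  nlinarith

/-- Friedland–Karlin around `G = diagonal κ_b * P`, once with `E = κ_b⁻¹` (giving `P`, of
spectral bound `1`) and once with `E = κ_a / κ_b`, reduces this to
`sum_mul_log_karlinWeight_lt`. -/
theorem one_lt_spectralBound_diagonal_karlinWeight_mul [Nonempty (Fin n)]
    (hPnn : ∀ i j, 0 ≤ P i j) (hP1 : 1 ᵥ* P = 1) (hPirr : IsIrreducibleMatrix P) (hd : ∀ i, 0 < d i)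
    (hdr : ∃ i, d i ≠ r) (ha : 0 < a) (hab : a < b) (hr : ∀ i, (1 - a) * d i < r)
    {y : Fin n → ℝ} (hy : ∀ i, 0 < y i) (hGy : (diagonal (karlinWeight d r b) * P) *ᵥ y = y) :
    1 < spectralBound (diagonal (karlinWeight d r a) * P) := by
  have hrb i : (1 - b) * d i < r := by nlinarith [hr i, hd i]
  set κa := karlinWeight d r a
  set κb := karlinWeight d r b
  have hκa := karlinWeight_pos hd ha hr
  have hκb := karlinWeight_pos hd (ha.trans hab) hrb
  set G := diagonal κb * P
  have hG i j : 0 ≤ G i j := by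
    simpa [G, Matrix.diagonal_mul] using mul_nonneg (hκb i).le (hPnn i j)
  have hGirr : IsIrreducibleMatrix G := hPirr.diagonal_mul fun i => (hκb i).ne'
  obtain ⟨-, u, -, hu, -, huG⟩ := hGirr.exists_perron_vectors fun i j _ => hG i j
  obtain hG1 : 1 = spectralBound G := eq_of_vecMul_eq_smul_of_mulVec_eq_smul hu huG
    (fun i => (hy i).le) (ne_zero_of_forall_pos hy) (by rwa [one_smul])
  rw [← hG1, one_smul] at huG
  have hscale (E : Fin n → ℝ) : diagonal E * G = diagonal (E * κb) * P := by
    rw [← mul_assoc, diagonal_mul_diagonal]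
    rfl
  have hZ : 0 < ∑ i, u i * y i :=
    Finset.sum_pos (fun i _ => mul_pos (hu i) (hy i)) Finset.univ_nonempty
  have hFK {E : Fin n → ℝ} (hE : ∀ i, 0 < E i) :=
    hGirr.exp_le_spectralBound_diagonal_mul hG hu hy huG hGy hE
  have hP : spectralBound P = 1 :=
    hPirr.spectralBound_eq_of_vecMul_eq_smul (u := 1) (fun i j _ => hPnn i j)
      (fun _ => one_pos) (by rw [hP1, one_smul])
  have h0 : 0 ≤ ∑ i, u i * y i * Real.log (κb i) := by
    have := hFK fun i => inv_pos.2 (hκb i)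
    rw [hscale, show (fun i => (κb i)⁻¹) * κb = fun _ => 1 from
      funext fun i => inv_mul_cancel₀ (hκb i).ne', diagonal_one, one_mul, hP,
      Real.exp_le_one_iff, div_le_iff₀ hZ, zero_mul] at this
    simpa [Real.log_inv] using this
  have hlt := sum_mul_log_karlinWeight_lt (fun i => mul_pos (hu i) (hy i)) hd ha hab hr hdr h0
  calc 1 < Real.exp ((∑ i, u i * y i * Real.log (κa i / κb i)) / ∑ i, u i * y i) := by
        refine Real.one_lt_exp_iff.2 (div_pos ?_ hZ)
        have hlog i : Real.log (κa i / κb i) = Real.log (κa i) - Real.log (κb i) :=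
          Real.log_div (hκa i).ne' (hκb i).ne'
        simp only [hlog, mul_sub, Finset.sum_sub_distrib]
        linarith
    _ ≤ spectralBound (diagonal (κa / κb) * G) := hFK fun i => div_pos (hκa i) (hκb i)
    _ = spectralBound (diagonal κa * P) := by
        rw [hscale]
        congr 3
        exact funext fun i => div_mul_cancel₀ _ (hκb i).ne'

theorem lt_spectralBound_diagonal_mul_mix [Nonempty (Fin n)] (hPnn : ∀ i j, 0 ≤ P i j)
    (hPirr : IsIrreducibleMatrix P) (hd : ∀ i, 0 < d i) (ha : 0 < a)
    (hr : ∀ i, (1 - a) * d i < r) (h1 : 1 < spectralBound (diagonal (karlinWeight d r a) * P)) :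
    r < spectralBound (diagonal d * ((1 - a) • 1 + a • P)) := by
  have hκa := karlinWeight_pos hd ha hr
  obtain ⟨y, -, hy, -, hGy, -⟩ :=
    (hPirr.diagonal_mul fun i => (hκa i).ne').exists_perron_vectors
      (IsMetzlerMatrix.diagonal_mul (A := P) (fun i j _ => hPnn i j) fun i => (hκa i).le)
  refine (isIrreducible_diagonal_mul_mix hPirr hd ha).lt_spectralBound_of_lt_mulVec
    (isMetzler_diagonal_mul_mix hPnn hd ha.le) hy fun i => ?_
  rw [diagonal_mul_mix_mulVec_apply (sub_pos.2 (hr i)).ne', hGy, Pi.smul_apply, smul_eq_mul,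
    ← sub_one_mul]
  have := mul_pos (mul_pos (sub_pos.2 (hr i)) (sub_pos.2 h1)) (hy i)
  linarith

theorem spectralBound_diagonal_mul_mix_lt [Nonempty (Fin n)] (hPnn : ∀ i j, 0 ≤ P i j)
    (hP1 : 1 ᵥ* P = 1) (hPirr : IsIrreducibleMatrix P) (hd : ∀ i, 0 < d i)
    (hdc : ∀ c, ∃ i, d i ≠ c) (ha : 0 < a) (hab : a < b)
    (hr : ∀ i, (1 - a) * d i < spectralBound (diagonal d * ((1 - b) • 1 + b • P))) :
    spectralBound (diagonal d * ((1 - b) • 1 + b • P)) <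
      spectralBound (diagonal d * ((1 - a) • 1 + a • P)) := by
  set r := spectralBound (diagonal d * ((1 - b) • 1 + b • P))
  have hb := ha.trans hab
  obtain ⟨y, -, hy, -, hNy, -⟩ :=
    (isIrreducible_diagonal_mul_mix hPirr hd hb).exists_perron_vectors
      (isMetzler_diagonal_mul_mix hPnn hd hb.le)
  have hGy : (diagonal (karlinWeight d r b) * P) *ᵥ y = y := funext fun i => by
    have hc : r - (1 - b) * d i ≠ 0 := by nlinarith [hr i, hd i]
    have := diagonal_mul_mix_mulVec_apply (P := P) hc y
    rw [hNy, Pi.smul_apply, smul_eq_mul, left_eq_add, mul_eq_zero] at this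
    exact sub_eq_zero.1 (this.resolve_left hc)
  exact lt_spectralBound_diagonal_mul_mix hPnn hPirr hd ha hr
    (one_lt_spectralBound_diagonal_karlinWeight_mul hPnn hP1 hPirr hd (hdc r) ha hab hr hy hGy)

end Karlin

/-- For an irreducible column-stochastic `P` and a positive diagonal `D` that is
not a scalar multiple of the identity, `α ↦ s(M(α)·D)` with `M(α) = (1-α)·I + α·P` is strictly
decreasing on `(0,∞)`. -/
theorem spectralBound_strictAntiOn {n : ℕ} (hn : 2 ≤ n)
    (P : Matrix (Fin n) (Fin n) ℝ)
    (hPnn : ∀ i j, 0 ≤ P i j)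
    (hPcol : ∀ j, ∑ i, P i j = 1)
    (hPirr : IsIrreducibleMatrix P)
    (d : Fin n → ℝ) (hd : ∀ i, 0 < d i)
    (hD : ¬ ∃ c : ℝ, Matrix.diagonal d = c • (1 : Matrix (Fin n) (Fin n) ℝ)) :
    StrictAntiOn
      (fun α : ℝ => spectralBound
        ((((1 - α) • (1 : Matrix (Fin n) (Fin n) ℝ)) + α • P) * Matrix.diagonal d))
      (Set.Ioi 0) := by
  have : Nontrivial (Fin n) := Fin.nontrivial_iff_two_le.2 hn
  have hP1 : 1 ᵥ* P = 1 := funext fun j => by simpa [vecMul, dotProduct] using hPcol j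
  have hdc (c : ℝ) : ∃ i, d i ≠ c := by
    by_contra! h
    exact hD ⟨c, by rw [show d = fun _ => c from funext h, ← smul_one_eq_diagonal]⟩
  intro a ha b _ hab
  simp only [spectralBound_mul_comm _ (diagonal d)]
  by_cases hr : ∀ i, (1 - a) * d i < spectralBound (diagonal d * ((1 - b) • 1 + b • P))
  · exact spectralBound_diagonal_mul_mix_lt hPnn hP1 hPirr hd hdc ha hab hr
  · push Not at hr
    obtain ⟨i, hi⟩ := hr
    exact hi.trans_lt (one_sub_mul_lt_spectralBound hPnn hPirr hd ha i)
end

section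
/- Let n ≥ 2 and let L be an n×n real matrix with all column sums equal to zero. Let C_{ij} denote the (i,j) cofactor of L, i.e., C_{ij} = (−1)^{i+j} times the determinant of the matrix obtained from L by deleting its i-th row and j-th column. Then C_{ij} = C_{jj} for all 1 ≤ i, j ≤ n. -/
/-!
`C_{ij}` is the determinant of `L` with row `i` replaced by `e_j`. Because the rows of `L` sum
to zero, adding to row `j` of that matrix all rows other than `i` and `j` turns it into `-L_i`
without changing the determinant; swapping rows `i` and `j` then gives `L` with row `j` replaced
by `e_j`, whose determinant is `C_{jj}`.
-/

open Matrix Filter Set Topology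

/-- The `(i,j)` cofactor of a square matrix: `(-1)^(i+j)` times the determinant of the
matrix obtained by deleting row `i` and column `j`. -/
noncomputable def cofactor {n : ℕ} (A : Matrix (Fin (n+1)) (Fin (n+1)) ℝ) (i j : Fin (n+1)) : ℝ :=
  (-1 : ℝ) ^ ((i : ℕ) + (j : ℕ)) * (A.submatrix i.succAbove j.succAbove).det

namespace Matrix

variable {n R : Type*} [Fintype n] [DecidableEq n] [CommRing R]

theorem det_updateRow_updateRow_swap (A : Matrix n n R) {i j : n} (hij : i ≠ j) (u w : n → R) :
    ((A.updateRow i u).updateRow j w).det = -((A.updateRow i w).updateRow j u).det := by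
  have hswap : (A.updateRow i u).updateRow j w
      = ((A.updateRow i w).updateRow j u).submatrix (Equiv.swap i j) id := by
    ext r c
    rcases eq_or_ne r j with rfl | hrj
    · simp [updateRow_ne hij]
    rcases eq_or_ne r i with rfl | hri
    · simp [updateRow_ne hij]
    · simp [updateRow_ne hrj, updateRow_ne hri, Equiv.swap_apply_of_ne_of_ne hri hrj]
  rw [hswap, det_permute, Equiv.Perm.sign_swap hij]
  simp

theorem det_updateRow_eq_of_sum_rows_eq_zero {A : Matrix n n R} (hA : ∑ k, A k = 0)
    (v : n → R) (i j : n) : (A.updateRow i v).det = (A.updateRow j v).det := by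
  rcases eq_or_ne i j with rfl | hij
  · rfl
  -- `c i = 0` keeps the replaced row `i` out of the combination; `c j = 1` keeps the determinant.
  set c : n → R := 1 - Pi.single i 1
  have hsum : ∑ k, c k • A.updateRow i v k = -A i :=
    calc ∑ k, c k • A.updateRow i v k = ∑ k, c k • A k := by
          refine Finset.sum_congr rfl fun k _ => ?_
          rcases eq_or_ne k i with rfl | hki
          · simp [c]
          · rw [updateRow_ne hki]
      _ = ∑ k, A k - A i := by
          simp [c, sub_smul, Pi.single_apply, Finset.sum_sub_distrib (f := fun k => A k),
            Finset.sum_ite_eq' Finset.univ i (fun k => A k)]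
      _ = -A i := by rw [hA, zero_sub]
  calc (A.updateRow i v).det
      = ((A.updateRow i v).updateRow j (∑ k, c k • A.updateRow i v k)).det := by
        rw [det_updateRow_sum]; simp [c, hij.symm]
    _ = -((A.updateRow i v).updateRow j (A i)).det := by
        rw [hsum, ← neg_one_smul R (A i), det_updateRow_smul, neg_one_mul]
    _ = (A.updateRow j v).det := by
        rw [det_updateRow_updateRow_swap A hij, neg_neg, updateRow_eq_self]

end Matrix

theorem cofactor_eq_adjugate_apply {n : ℕ} (A : Matrix (Fin (n+1)) (Fin (n+1)) ℝ)
    (i j : Fin (n+1)) : cofactor A i j = adjugate A j i := by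
  rw [cofactor, adjugate_fin_succ_eq_det_submatrix, add_comm]

theorem cofactor_eq_diag_general {n : ℕ}
    (L : Matrix (Fin (n+1)) (Fin (n+1)) ℝ)
    (hcol : ∀ j, ∑ i, L i j = 0)
    (i j : Fin (n+1)) :
    cofactor L i j = cofactor L j j := by
  have hrows : ∑ k, L k = 0 := funext fun c => (Finset.sum_apply c _ fun k => L k).trans (hcol c)
  rw [cofactor_eq_adjugate_apply, cofactor_eq_adjugate_apply, adjugate_apply, adjugate_apply]
  exact det_updateRow_eq_of_sum_rows_eq_zero hrows _ i j

/-- For a square matrix with zero column sums, any cofactor in a column equals the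
diagonal cofactor of that column: `C_{ij} = C_{jj}`. -/
theorem cofactor_eq_diag {n : ℕ} (hn : 1 ≤ n)
    (L : Matrix (Fin (n+1)) (Fin (n+1)) ℝ)
    (hcol : ∀ j, ∑ i, L i j = 0)
    (i j : Fin (n+1)) :
    cofactor L i j = cofactor L j j :=
  cofactor_eq_diag_general L hcol i j
end

section
/- Let n ≥ 2 and let L be an n×n real symmetric matrix with all column sums equal to zero. Let C_{ij} denote the (i,j) cofactor of L. Then all cofactors of L are equal: C_{ij} = C_{11} for all 1 ≤ i, j ≤ n. -/
open Matrix Filter Set Topology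

/-!
The cofactor `C_{ij}` is the entry `(j, i)` of the adjugate. If `L` has zero row sums, then
`adj L j i - adj L k i` is the determinant of `L` with row `i` replaced by `e_j - e_k`; that matrix
still kills the all-ones vector, so its determinant vanishes and every column of `adj L` is
constant. Symmetry of `L` makes its row sums zero and `adj L` symmetric, so `adj L` is constant.
-/

namespace Matrix

variable {n R : Type*} [Fintype n] [DecidableEq n] [CommRing R]

theorem adjugate_apply_eq_of_mulVec_one_eq_zero {L : Matrix n n R} (hL : L *ᵥ 1 = 0)
    (j k i : n) : adjugate L j i = adjugate L k i := by
  rw [adjugate_apply, adjugate_apply, ← sub_eq_zero]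
  have hker : L.updateRow i (Pi.single j 1 - Pi.single k 1) *ᵥ 1 = 0 := by
    rw [updateRow_mulVec, hL, sub_dotProduct, single_dotProduct, single_dotProduct]
    simp
  have := det_eq_zero_of_mulVec_eq_zero_of_mem_nonZeroDivisors hker (i := i) (one_mem _)
  rwa [sub_eq_add_neg, det_updateRow_add, ← neg_one_smul R, det_updateRow_smul, neg_one_mul,
    ← sub_eq_add_neg] at this

end Matrix

theorem cofactor_all_eq_of_symm_general {n : ℕ}
    (L : Matrix (Fin (n+1)) (Fin (n+1)) ℝ)
    (hsym : L.IsSymm)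
    (hcol : ∀ j, ∑ i, L i j = 0)
    (i j : Fin (n+1)) :
    cofactor L i j = cofactor L 0 0 := by
  have hrow : L *ᵥ 1 = 0 := by
    rw [← hsym, ← vecMul_transpose]
    exact funext fun j => by simpa [vecMul, dotProduct] using hcol j
  have hconst := adjugate_apply_eq_of_mulVec_one_eq_zero hrow
  have hadj_symm : (adjugate L).IsSymm := by rw [IsSymm, adjugate_transpose, hsym]
  rw [cofactor_eq_adjugate_apply, cofactor_eq_adjugate_apply, hconst j 0 i, ← hadj_symm.apply,
    hconst i 0 0]

/-- For a symmetric square matrix with zero column sums, all cofactors are equal: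
`C_{ij} = C_{11}` for all `i, j`. -/
theorem cofactor_all_eq_of_symm {n : ℕ} (hn : 1 ≤ n)
    (L : Matrix (Fin (n+1)) (Fin (n+1)) ℝ)
    (hsym : L.IsSymm)
    (hcol : ∀ j, ∑ i, L i j = 0)
    (i j : Fin (n+1)) :
    cofactor L i j = cofactor L 0 0 :=
  cofactor_all_eq_of_symm_general L hsym hcol i j
end

section
/- Let n ≥ 2 and let L be an n×n real matrix that is essentially nonnegative (all off-diagonal entries nonnegative), irreducible, and has all column sums equal to zero, and let C_{ij} denote the (i,j) cofactor of L. Then (−1)^{n−1}·C_{ii} > 0 for every i = 1,…,n; in particular, the vector (−1)^{n−1}·(C_{11},…,C_{nn})ᵀ is a strictly positive eigenvector of L corresponding to the eigenvalue 0. -/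
open Matrix Filter Set Topology

/-!
Delete row and column `i` of `L` to get `M`. Its off-diagonal entries are nonnegative and its
column sums are `-L i _ ≤ 0`, so for `t ≥ 0` the matrix `t • 1 - M` is weakly column diagonally
dominant, and irreducibility of `L` forces every set of columns to contain a strictly dominant
column or to have a nonzero entry outside the set. Taussky's maximum-modulus argument then makes
`t • 1 - M` nonsingular, so the monic polynomial `charpoly M` has no root in `[0, ∞)` and is
positive at `0`, i.e. `det (-M) = (-1)^n C_ii > 0`.

For the eigenvector: `1ᵀ L = 0` and all these minors are nonzero, so every left kernel vector of
`L` is constant. The rows of `adj L` lie in the left kernel because `adj L * L = det L • 1 = 0`,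
hence `L *ᵥ diag (adj L)` is the diagonal of `L * adj L = 0`.
-/

namespace Polynomial

theorem Monic.eval_pos_of_forall_ge_eval_ne_zero {P : ℝ[X]} (hP : P.Monic) {a : ℝ}
    (h : ∀ t, a ≤ t → P.eval t ≠ 0) : 0 < P.eval a := by
  by_cases hdeg : P.degree ≤ 0
  · simp [hP.degree_le_zero_iff_eq_one.mp hdeg]
  have htop : Tendsto P.eval atTop atTop :=
    P.tendsto_atTop_of_leadingCoeff_nonneg (not_le.mp hdeg) (by simp [hP.leadingCoeff])
  obtain ⟨T, haT, hT⟩ := ((eventually_ge_atTop a).and (htop.eventually_gt_atTop 0)).exists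
  by_contra! hle
  obtain ⟨c, hc, hPc⟩ := intermediate_value_Icc haT P.continuous.continuousOn ⟨hle, hT.le⟩
  exact h c hc.1 hPc

end Polynomial

namespace Matrix

section Dominance

variable {ι : Type*} [Fintype ι] [DecidableEq ι]

theorem det_ne_zero_of_sum_col_le_diag {K : Type*} [NormedField K] {A : Matrix ι ι K}
    (hdom : ∀ k, ∑ i ∈ Finset.univ.erase k, ‖A i k‖ ≤ ‖A k k‖)
    (hchain : ∀ S : Finset ι, S.Nonempty → ∃ k ∈ S,
      ∑ i ∈ Finset.univ.erase k, ‖A i k‖ < ‖A k k‖ ∨ ∃ i ∉ S, A i k ≠ 0) :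
    A.det ≠ 0 := by
  intro hdet
  obtain ⟨v, hv0, hv⟩ := exists_vecMul_eq_zero_iff.mpr hdet
  obtain ⟨i₀, hi₀⟩ := Function.ne_iff.mp hv0
  obtain ⟨k₀, -, hk₀⟩ :=
    Finset.exists_max_image Finset.univ (fun i => ‖v i‖) ⟨i₀, Finset.mem_univ _⟩
  set m := ‖v k₀‖
  have hmax : ∀ i, ‖v i‖ ≤ m := fun i => hk₀ i (Finset.mem_univ i)
  have hm : 0 < m := (norm_pos_iff.mpr hi₀).trans_le (hmax i₀)
  -- at a column where `|v|` is maximal, dominance turns the kernel equation into a chain of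
  -- inequalities that must all be equalities
  obtain ⟨k, hk, hk_alt⟩ := hchain {k | ‖v k‖ = m} ⟨k₀, by simp [m]⟩
  replace hk : ‖v k‖ = m := (Finset.mem_filter.mp hk).2
  have hvk : A k k * v k = -∑ i ∈ Finset.univ.erase k, v i * A i k := by
    have := congrFun hv k
    simp only [vecMul, dotProduct, Pi.zero_apply] at this
    rw [← Finset.add_sum_erase _ _ (Finset.mem_univ k)] at this
    linear_combination this
  have hle : ‖A k k‖ * m ≤ ∑ i ∈ Finset.univ.erase k, ‖A i k‖ * ‖v i‖ :=
    calc ‖A k k‖ * m = ‖∑ i ∈ Finset.univ.erase k, v i * A i k‖ := by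
          rw [← hk, ← norm_mul, hvk, norm_neg]
      _ ≤ _ := (norm_sum_le _ _).trans_eq (by simp_rw [norm_mul, mul_comm])
  have hterm : ∀ i ∈ Finset.univ.erase k, ‖A i k‖ * ‖v i‖ ≤ ‖A i k‖ * m :=
    fun i _ => mul_le_mul_of_nonneg_left (hmax i) (norm_nonneg _)
  have hge := Finset.sum_le_sum hterm
  rw [← Finset.sum_mul] at hge
  rcases hk_alt with hstrict | ⟨i, hiS, hik⟩
  · exact (hle.trans hge).not_gt (mul_lt_mul_of_pos_right hstrict hm)
  · have hik' : i ≠ k := by rintro rfl; exact hiS (by simpa using hk)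
    have hsum : ∑ i ∈ Finset.univ.erase k, ‖A i k‖ * ‖v i‖ =
        ∑ i ∈ Finset.univ.erase k, ‖A i k‖ * m := by
      rw [← Finset.sum_mul]
      exact hge.antisymm ((mul_le_mul_of_nonneg_right (hdom k) hm.le).trans hle)
    have hi := (Finset.sum_eq_sum_iff_of_le hterm).mp hsum i (by simp [hik'])
    exact hiS (by simpa using mul_left_cancel₀ (norm_ne_zero_iff.mpr hik) hi)

theorem eval_charpoly_ne_zero_of_nonneg_of_sum_col_nonpos {B : Matrix ι ι ℝ}
    (hoff : ∀ i j, i ≠ j → 0 ≤ B i j) (hcol : ∀ j, ∑ i, B i j ≤ 0)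
    (hchain : ∀ S : Finset ι, S.Nonempty → ∃ k ∈ S, ∑ i, B i k < 0 ∨ ∃ i ∉ S, B i k ≠ 0)
    {t : ℝ} (ht : 0 ≤ t) : B.charpoly.eval t ≠ 0 := by
  rw [eval_charpoly]
  have hoff_sum : ∀ k, ∑ i ∈ Finset.univ.erase k, B i k = ∑ i, B i k - B k k := fun k => by
    rw [← Finset.add_sum_erase _ _ (Finset.mem_univ k), add_sub_cancel_left]
  have hoff_norm : ∀ k,
      ∑ i ∈ Finset.univ.erase k, ‖(scalar ι t - B) i k‖ = ∑ i, B i k - B k k := by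
    intro k
    rw [← hoff_sum]
    refine Finset.sum_congr rfl fun i hi => ?_
    have hik := Finset.ne_of_mem_erase hi
    simp [hik, abs_of_nonneg (hoff i k hik)]
  have hdiag_norm : ∀ k, ‖(scalar ι t - B) k k‖ = t - B k k := by
    intro k
    have : 0 ≤ ∑ i ∈ Finset.univ.erase k, B i k :=
      Finset.sum_nonneg fun i hi => hoff i k (Finset.ne_of_mem_erase hi)
    simp only [sub_apply, scalar_apply, diagonal_apply_eq, Real.norm_eq_abs]
    exact abs_of_nonneg (by linarith [hcol k, hoff_sum k])
  refine det_ne_zero_of_sum_col_le_diag (fun k => ?_) fun S hS => ?_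
  · rw [hoff_norm, hdiag_norm]
    linarith [hcol k]
  · obtain ⟨k, hk, hneg | ⟨i, hiS, hik⟩⟩ := hchain S hS
    · exact ⟨k, hk, .inl (by rw [hoff_norm, hdiag_norm]; linarith)⟩
    · have hik' : i ≠ k := by rintro rfl; exact hiS hk
      exact ⟨k, hk, .inr ⟨i, hiS, by simpa [hik'] using hik⟩⟩

theorem det_neg_pos_of_eval_charpoly_ne_zero {B : Matrix ι ι ℝ}
    (h : ∀ t, 0 ≤ t → B.charpoly.eval t ≠ 0) : 0 < (-B).det := by
  simpa [eval_charpoly] using B.charpoly_monic.eval_pos_of_forall_ge_eval_ne_zero h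

end Dominance

section LeftKernel

variable {K : Type*} [Field K] {n : ℕ}

theorem eq_of_vecMul_eq_zero_of_sum_col_eq_zero {L : Matrix (Fin (n+1)) (Fin (n+1)) K}
    (hcol : ∀ j, ∑ i, L i j = 0) {i : Fin (n+1)}
    (hi : (L.submatrix i.succAbove i.succAbove).det ≠ 0)
    {x : Fin (n+1) → K} (hx : x ᵥ* L = 0) (b : Fin (n+1)) : x b = x i := by
  set y : Fin (n+1) → K := fun k => x k - x i
  have hy : y ᵥ* L = 0 := by
    funext j
    have hxj := congrFun hx j
    simp only [vecMul, dotProduct, Pi.zero_apply] at hxj ⊢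
    simp only [y, sub_mul, Finset.sum_sub_distrib, ← Finset.mul_sum, hxj, hcol j, mul_zero,
      sub_zero]
  have hyσ : (y ∘ i.succAbove) ᵥ* L.submatrix i.succAbove i.succAbove = 0 := by
    funext j
    have hyj := congrFun hy (i.succAbove j)
    simp only [vecMul, dotProduct, Pi.zero_apply, Fin.sum_univ_succAbove _ i, y, sub_self,
      zero_mul, zero_add] at hyj
    simpa [vecMul, dotProduct] using hyj
  rcases eq_or_ne b i with rfl | hbi
  · rfl
  obtain ⟨a, rfl⟩ := Fin.exists_succAbove_eq hbi
  exact sub_eq_zero.mp (congrFun (eq_zero_of_vecMul_eq_zero hi hyσ) a)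

theorem mulVec_diag_adjugate_eq_zero {L : Matrix (Fin (n+1)) (Fin (n+1)) K}
    (hcol : ∀ j, ∑ i, L i j = 0)
    (hsub : ∀ i : Fin (n+1), (L.submatrix i.succAbove i.succAbove).det ≠ 0) :
    L *ᵥ L.adjugate.diag = 0 := by
  have hdet : L.det = 0 := exists_vecMul_eq_zero_iff.mp
    ⟨fun _ => 1, fun h => one_ne_zero (congrFun h 0),
      funext fun j => by simp [vecMul, dotProduct, hcol j]⟩
  have hrow : ∀ j k, L.adjugate j k = L.adjugate j j := fun j =>
    eq_of_vecMul_eq_zero_of_sum_col_eq_zero hcol (hsub j)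
      (funext fun c => by simp [vecMul, dotProduct, ← mul_apply, adjugate_mul, hdet])
  funext r
  calc (L *ᵥ L.adjugate.diag) r = (L * L.adjugate) r r := by
        simp only [mulVec, dotProduct, diag_apply, mul_apply, hrow _ r]
    _ = 0 := by simp [mul_adjugate, hdet]

end LeftKernel

end Matrix

open Matrix in
theorem IsIrreducibleMatrix.det_neg_submatrix_succAbove_pos {n : ℕ}
    {L : Matrix (Fin (n+1)) (Fin (n+1)) ℝ} (hirr : IsIrreducibleMatrix L)
    (hess : ∀ i j, i ≠ j → 0 ≤ L i j) (hcol : ∀ j, ∑ i, L i j = 0) (i : Fin (n+1)) :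
    0 < (-(L.submatrix i.succAbove i.succAbove)).det := by
  have hcol' : ∀ k, ∑ j, L (i.succAbove j) (i.succAbove k) = -L i (i.succAbove k) := by
    intro k
    have := hcol (i.succAbove k)
    rw [Fin.sum_univ_succAbove _ i] at this
    linear_combination this
  have hi_nonneg : ∀ k, 0 ≤ L i (i.succAbove k) := fun k => hess _ _ (Fin.succAbove_ne i k).symm
  refine det_neg_pos_of_eval_charpoly_ne_zero fun t ht =>
    eval_charpoly_ne_zero_of_nonneg_of_sum_col_nonpos
      (fun j k hjk => hess _ _ (Fin.succAbove_right_injective.ne hjk))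
      (fun k => by simpa [hcol'] using hi_nonneg k) (fun S hS => ?_) ht
  -- irreducibility, applied to the complement of `i.succAbove '' S`, gives an edge into `S`
  -- either from `i` (a negative column sum of the minor) or from outside `S`
  have hi : i ∉ S.image i.succAbove := by simp [Fin.succAbove_ne]
  obtain ⟨a, ha, b, hb, hab⟩ := hirr (↑(S.image i.succAbove))ᶜ ⟨i, hi⟩
    (Set.ne_univ_iff_exists_notMem _ |>.mpr ⟨i.succAbove hS.choose, by simp [hS.choose_spec]⟩)
  obtain ⟨k, hk, rfl⟩ : ∃ k ∈ S, i.succAbove k = b := by simpa using hb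
  refine ⟨k, hk, ?_⟩
  rcases eq_or_ne a i with rfl | hai
  · exact .inl (by simpa [hcol'] using (hi_nonneg k).lt_of_ne' hab)
  · obtain ⟨j, rfl⟩ := Fin.exists_succAbove_eq hai
    exact .inr ⟨j, fun hj => ha (by simp [hj]), hab⟩

theorem cofactor_self {n : ℕ} (A : Matrix (Fin (n+1)) (Fin (n+1)) ℝ) (i : Fin (n+1)) :
    cofactor A i i = (A.submatrix i.succAbove i.succAbove).det := by
  rw [cofactor, Even.neg_one_pow ⟨i, rfl⟩, one_mul]

theorem diag_cofactor_pos_general {n : ℕ}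
    (L : Matrix (Fin (n+1)) (Fin (n+1)) ℝ)
    (hess : ∀ i j, i ≠ j → 0 ≤ L i j)
    (hirr : IsIrreducibleMatrix L)
    (hcol : ∀ j, ∑ i, L i j = 0) :
    (∀ i, 0 < (-1 : ℝ) ^ n * cofactor L i i) ∧
    L *ᵥ (fun i => (-1 : ℝ) ^ n * cofactor L i i) = (0 : ℝ) • (fun i => (-1 : ℝ) ^ n * cofactor L i i) := by
  have hsub (i : Fin (n+1)) := hirr.det_neg_submatrix_succAbove_pos hess hcol i
  have hcof : (fun i => (-1 : ℝ) ^ n * cofactor L i i) = (-1 : ℝ) ^ n • L.adjugate.diag := by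
    ext i
    simp [cofactor_self, adjugate_fin_succ_eq_det_submatrix]
  refine ⟨fun i => ?_, ?_⟩
  · simpa [cofactor_self, det_neg] using hsub i
  · rw [zero_smul, hcof, mulVec_smul, mulVec_diag_adjugate_eq_zero hcol, smul_zero]
    intro i hi
    simpa [det_neg, hi] using hsub i

/-- For an essentially nonnegative, irreducible matrix `L` of size `n+1` with zero
column sums, `(-1)^n·C_{ii} > 0` for all `i` (here `(-1)^n = (-1)^{(n+1)-1}`), so the vector
`(-1)^n·(C_{11},…,C_{nn})ᵀ` is a strictly positive eigenvector of `L` for the eigenvalue `0`. -/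
theorem diag_cofactor_pos {n : ℕ} (hn : 1 ≤ n)
    (L : Matrix (Fin (n+1)) (Fin (n+1)) ℝ)
    (hess : ∀ i j, i ≠ j → 0 ≤ L i j)
    (hirr : IsIrreducibleMatrix L)
    (hcol : ∀ j, ∑ i, L i j = 0) :
    (∀ i, 0 < (-1 : ℝ) ^ n * cofactor L i i) ∧
    L *ᵥ (fun i => (-1 : ℝ) ^ n * cofactor L i i) = (0 : ℝ) • (fun i => (-1 : ℝ) ^ n * cofactor L i i) :=
  diag_cofactor_pos_general L hess hirr hcol
end

section
/- Let n ≥ 2, let L be an n×n real matrix that is essentially nonnegative (all off-diagonal entries nonnegative), irreducible, and has all column sums equal to zero, let γ_i > 0 for i = 1,…,n, and set D = diag(γ_1,…,γ_n). Let C_{ij} denote the (i,j) cofactor of L. Then the function d ↦ det(D − d·L) is a polynomial in d whose coefficient of dⁿ is zero and whose coefficient of d^{n−1} equals (−1)^{n−1}·Σ_{i=1}^n γ_i·C_{ii}, which is strictly positive; in particular det(D − d·L) is a polynomial of degree exactly n−1 in d. -/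
open Matrix Filter Set Topology

/-! Expanding `det (D - d • L) = det (d • (-L) + D)` by the Leibniz formula, the coefficient of
`d ^ (n + 1)` is `det (-L)`, which vanishes because the all-ones vector is a left null vector of
`L`, and the coefficient of `d ^ n` is `∑ γ i * adjugate (-L) i i = (-1) ^ n * ∑ γ i * C i i`.

Each diagonal entry of `adjugate (-L)` is the principal minor `det (-L)ᵢᵢ` and is positive. Indeed
`(-L)ᵢᵢ + t • 1` is nonsingular for `t ≥ 0`: a left null vector, extended by `0` at `i`, would have
a positive maximum (after a sign change) away from `i`; since the columns of `L` sum to zero, a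
maximum principle forces every `k` with `L k j ≠ 0` into the set of maximisers whenever `j` is
one, and irreducibility rules this out. So the monic polynomial `t ↦ det ((-L)ᵢᵢ + t • 1)` has no
root in `[0, ∞)`, hence is positive at `0`. -/

open Polynomial Finset

namespace Polynomial

variable {R ι : Type*} [CommRing R]

theorem coeff_prod_C_mul_X_add_C_card (s : Finset ι) (a b : ι → R) :
    (∏ i ∈ s, (C (a i) * X + C (b i))).coeff #s = ∏ i ∈ s, a i := by
  rw [← mul_one #s, coeff_prod_of_natDegree_le s _ 1 fun i _ => by compute_degree]
  simp

theorem coeff_C_mul_X_add_C_mul_succ (a b : R) (p : R[X]) (k : ℕ) :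
    ((C a * X + C b) * p).coeff (k + 1) = a * p.coeff k + b * p.coeff (k + 1) := by
  rw [add_mul, mul_assoc, coeff_add, coeff_C_mul, coeff_X_mul, coeff_C_mul]

theorem coeff_prod_C_mul_X_add_C_card_sub_one [DecidableEq ι] {s : Finset ι} (hs : s.Nonempty)
    (a b : ι → R) :
    (∏ i ∈ s, (C (a i) * X + C (b i))).coeff (#s - 1) =
      ∑ j ∈ s, b j * ∏ i ∈ s.erase j, a i := by
  induction hs using Finset.Nonempty.cons_induction with
  | singleton k => simp
  | cons k s hk hs ih =>
    obtain ⟨m, hm⟩ : ∃ m, #s = m + 1 := ⟨#s - 1, by have := hs.card_pos; omega⟩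
    rw [prod_cons, card_cons, Nat.add_sub_cancel, hm, coeff_C_mul_X_add_C_mul_succ, ← hm,
      coeff_prod_C_mul_X_add_C_card, show m = #s - 1 by omega, ih, sum_cons, erase_cons, mul_sum,
      add_comm]
    congr 1
    refine sum_congr rfl fun j hj => ?_
    rw [erase_cons_of_ne _ (ne_of_mem_of_not_mem hj hk).symm, prod_cons]
    ring

variable {n : Type*} [Fintype n] [DecidableEq n]

theorem coeff_det_X_add_C_card_sub_one [Nonempty n] (A B : Matrix n n R) :
    (det ((X : R[X]) • A.map C + B.map C)).coeff (Fintype.card n - 1) =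
      ∑ j, (A.updateCol j fun i => B i j).det := by
  simp only [det_apply, finsetSum_coeff, Units.smul_def, coeff_smul]
  rw [sum_comm]
  refine sum_congr rfl fun σ _ => ?_
  simp only [Matrix.add_apply, Matrix.smul_apply, map_apply, smul_eq_mul, X_mul_C]
  rw [← card_univ, coeff_prod_C_mul_X_add_C_card_sub_one univ_nonempty, smul_sum]
  refine sum_congr rfl fun j _ => ?_
  rw [← mul_prod_erase univ _ (mem_univ j), updateCol_self]
  congr 2
  exact prod_congr rfl fun i hi => (updateCol_ne (ne_of_mem_erase hi)).symm

theorem eval_det_X_smul_add_C (A B : Matrix n n R) (r : R) :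
    (det ((X : R[X]) • A.map C + B.map C)).eval r = det (r • A + B) := by
  rw [← coe_evalRingHom, RingHom.map_det]
  congr 1
  ext i j
  simp only [RingHom.mapMatrix_apply, map_apply, Matrix.add_apply, Matrix.smul_apply, smul_eq_mul,
    coe_evalRingHom, eval_add, eval_mul, eval_X, eval_C]

theorem Monic.eval_pos_of_forall_ge_eval_ne_zero_s11 {p : ℝ[X]} (hp : p.Monic) {a : ℝ}
    (h : ∀ t ≥ a, p.eval t ≠ 0) : 0 < p.eval a := by
  rcases eq_or_ne p.natDegree 0 with hdeg | hdeg
  · simp [hp.natDegree_eq_zero.1 hdeg]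
  have htend : Tendsto p.eval atTop atTop :=
    p.tendsto_atTop_of_leadingCoeff_nonneg
      (natDegree_pos_iff_degree_pos.1 (Nat.pos_of_ne_zero hdeg)) (hp.leadingCoeff ▸ zero_le_one)
  obtain ⟨T, hT, haT⟩ := ((htend.eventually_gt_atTop 0).and (eventually_ge_atTop a)).exists
  by_contra! ha
  obtain ⟨c, hc, hc0⟩ := intermediate_value_Icc haT p.continuous.continuousOn ⟨ha, hT.le⟩
  exact h c hc.1 hc0

end Polynomial

namespace Matrix

theorem det_updateCol_diagonal {n R : Type*} [Fintype n] [DecidableEq n] [CommRing R]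
    (A : Matrix n n R) (d : n → R) (j : n) :
    (A.updateCol j fun i => diagonal d i j).det = d j * adjugate A j j := by
  have hcol : (fun i => diagonal d i j) = d j • Pi.single j 1 := by
    ext i
    rcases eq_or_ne i j with rfl | hij <;> simp [*]
  rw [hcol, det_updateCol_smul, ← transpose_apply (adjugate A), adjugate_transpose,
    adjugate_apply, updateRow_transpose, det_transpose]

theorem det_eq_zero_of_sum_col_eq_zero {n R : Type*} [Fintype n] [DecidableEq n] [Nonempty n]
    [CommRing R] [IsDomain R] {A : Matrix n n R} (h : ∀ j, ∑ i, A i j = 0) : A.det = 0 :=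
  exists_vecMul_eq_zero_iff.1 ⟨1, one_ne_zero, funext fun j => by simp [vecMul, dotProduct, h]⟩

theorem adjugate_apply_self {m : ℕ} {R : Type*} [CommRing R]
    (A : Matrix (Fin (m + 1)) (Fin (m + 1)) R) (i : Fin (m + 1)) :
    adjugate A i i = (A.submatrix i.succAbove i.succAbove).det := by
  rw [adjugate_fin_succ_eq_det_submatrix, ← two_mul, pow_mul, neg_one_sq, one_pow, one_mul]

theorem adjugate_apply_eq_cofactor {m : ℕ} (A : Matrix (Fin (m + 1)) (Fin (m + 1)) ℝ)
    (i j : Fin (m + 1)) : adjugate A i j = cofactor A j i :=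
  adjugate_fin_succ_eq_det_submatrix A i j

theorem adjugate_neg_apply_self {m : ℕ} (A : Matrix (Fin (m + 1)) (Fin (m + 1)) ℝ)
    (i : Fin (m + 1)) : adjugate (-A) i i = (-1) ^ m * cofactor A i i := by
  rw [← neg_one_smul ℝ A, adjugate_smul, smul_apply, Fintype.card_fin, Nat.add_sub_cancel,
    adjugate_apply_eq_cofactor, smul_eq_mul]

end Matrix

theorem eq_of_forall_le_of_vecMul_nonneg {ι : Type*} [Fintype ι] {L : Matrix ι ι ℝ}
    (hess : ∀ i j, i ≠ j → 0 ≤ L i j) (hcol : ∀ j, ∑ i, L i j = 0)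
    {y : ι → ℝ} {c : ι} (hmax : ∀ i, y i ≤ y c) (hc : 0 ≤ (y ᵥ* L) c)
    {i : ι} (hic : L i c ≠ 0) : y i = y c := by
  have hterm : ∀ k, (y k - y c) * L k c ≤ 0 := by
    intro k
    rcases eq_or_ne k c with rfl | hkc
    · simp
    · exact mul_nonpos_of_nonpos_of_nonneg (sub_nonpos.2 (hmax k)) (hess k c hkc)
  have hsum : (y ᵥ* L) c = ∑ k, (y k - y c) * L k c := by
    simp only [sub_mul, sum_sub_distrib, ← mul_sum, hcol, mul_zero, sub_zero]
    rfl
  have hzero := (sum_eq_zero_iff_of_nonpos fun k _ => hterm k).1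
    (le_antisymm (sum_nonpos fun k _ => hterm k) (hsum ▸ hc)) i (mem_univ i)
  exact sub_eq_zero.1 ((mul_eq_zero.1 hzero).resolve_right hic)

section Irreducible

variable {m : ℕ}

theorem nonpos_of_vecMul_eq_smul_of_apply_eq_zero {L : Matrix (Fin m) (Fin m) ℝ}
    (hess : ∀ i j, i ≠ j → 0 ≤ L i j) (hirr : IsIrreducibleMatrix L)
    (hcol : ∀ j, ∑ i, L i j = 0) {t : ℝ} (ht : 0 ≤ t) {y : Fin m → ℝ} {i₀ : Fin m}
    (hy₀ : y i₀ = 0) (hy : ∀ c ≠ i₀, (y ᵥ* L) c = t * y c) (i : Fin m) : y i ≤ 0 := by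
  by_contra! hi
  have : Nonempty (Fin m) := ⟨i₀⟩
  obtain ⟨c, hc⟩ := Finite.exists_max y
  have hpos : 0 < y c := hi.trans_le (hc i)
  obtain ⟨k, hk, j, hj, hkj⟩ := hirr {k | y k = y c}ᶜ ⟨i₀, by simp [hy₀, hpos.ne]⟩
    (compl_ne_univ.2 ⟨c, rfl⟩)
  replace hj : y j = y c := by simpa using hj
  have hj₀ : j ≠ i₀ := by rintro rfl; linarith
  refine hk (hj ▸ eq_of_forall_le_of_vecMul_nonneg hess hcol (hj ▸ hc) ?_ hkj)
  rw [hy j hj₀, hj]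
  exact mul_nonneg ht hpos.le

theorem eq_zero_of_vecMul_eq_smul_of_apply_eq_zero {L : Matrix (Fin m) (Fin m) ℝ}
    (hess : ∀ i j, i ≠ j → 0 ≤ L i j) (hirr : IsIrreducibleMatrix L)
    (hcol : ∀ j, ∑ i, L i j = 0) {t : ℝ} (ht : 0 ≤ t) {y : Fin m → ℝ} {i₀ : Fin m}
    (hy₀ : y i₀ = 0) (hy : ∀ c ≠ i₀, (y ᵥ* L) c = t * y c) : y = 0 := by
  have hneg : ∀ c ≠ i₀, ((-y) ᵥ* L) c = t * (-y) c := fun c hc => by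
    simp [neg_vecMul, hy c hc]
  funext i
  have hle := nonpos_of_vecMul_eq_smul_of_apply_eq_zero hess hirr hcol ht hy₀ hy i
  have hge := nonpos_of_vecMul_eq_smul_of_apply_eq_zero hess hirr hcol ht (by simp [hy₀]) hneg i
  exact le_antisymm hle (neg_nonpos.1 hge)

variable {L : Matrix (Fin (m + 1)) (Fin (m + 1)) ℝ}

theorem det_submatrix_succAbove_add_smul_one_ne_zero (hess : ∀ i j, i ≠ j → 0 ≤ L i j)
    (hirr : IsIrreducibleMatrix L) (hcol : ∀ j, ∑ i, L i j = 0) (i₀ : Fin (m + 1)) {t : ℝ}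
    (ht : 0 ≤ t) : ((-L).submatrix i₀.succAbove i₀.succAbove + t • 1).det ≠ 0 := by
  intro hdet
  obtain ⟨x, hx0, hx⟩ := exists_vecMul_eq_zero_iff.2 hdet
  set y : Fin (m + 1) → ℝ := Fin.insertNth i₀ 0 x
  have hy : ∀ c ≠ i₀, (y ᵥ* L) c = t * y c := by
    intro c hc
    obtain ⟨k, rfl⟩ := Fin.exists_succAbove_eq hc
    have hk := congrFun hx k
    simp only [vecMul_add, vecMul_smul, vecMul_one, Pi.add_apply, Pi.smul_apply] at hk
    simp only [vecMul, dotProduct, Fin.sum_univ_succAbove _ i₀, y, Fin.insertNth_apply_same,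
      Fin.insertNth_apply_succAbove, zero_mul, zero_add, submatrix_apply, Matrix.neg_apply,
      mul_neg, sum_neg_distrib, smul_eq_mul, Pi.zero_apply] at hk ⊢
    linarith
  have hy0 := eq_zero_of_vecMul_eq_smul_of_apply_eq_zero hess hirr hcol ht (by simp [y]) hy
  exact hx0 (funext fun k => by simpa [y] using congrFun hy0 (i₀.succAbove k))

theorem det_submatrix_succAbove_pos (hess : ∀ i j, i ≠ j → 0 ≤ L i j)
    (hirr : IsIrreducibleMatrix L) (hcol : ∀ j, ∑ i, L i j = 0) (i₀ : Fin (m + 1)) :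
    0 < ((-L).submatrix i₀.succAbove i₀.succAbove).det := by
  set A := (-L).submatrix i₀.succAbove i₀.succAbove
  have heval : ∀ t, (-A).charpoly.eval t = (A + t • 1).det := fun t => by
    rw [eval_charpoly, sub_neg_eq_add, add_comm, scalar_apply, smul_one_eq_diagonal]
  simpa [heval] using (charpoly_monic (-A)).eval_pos_of_forall_ge_eval_ne_zero_s11 fun t ht =>
    heval t ▸ det_submatrix_succAbove_add_smul_one_ne_zero hess hirr hcol i₀ ht

end Irreducible

theorem det_V_polynomial_general {n : ℕ}
    (L : Matrix (Fin (n+1)) (Fin (n+1)) ℝ)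
    (hess : ∀ i j, i ≠ j → 0 ≤ L i j)
    (hirr : IsIrreducibleMatrix L)
    (hcol : ∀ j, ∑ i, L i j = 0)
    (γ : Fin (n+1) → ℝ) (hγ : ∀ i, 0 < γ i) :
    ∃ p : Polynomial ℝ,
      (∀ d : ℝ, (Matrix.diagonal γ - d • L).det = p.eval d) ∧
      p.coeff (n+1) = 0 ∧
      p.coeff n = (-1 : ℝ) ^ n * ∑ i, γ i * cofactor L i i ∧
      0 < (-1 : ℝ) ^ n * ∑ i, γ i * cofactor L i i ∧
      p.degree = n := by
  have hsum : (-1 : ℝ) ^ n * ∑ i, γ i * cofactor L i i = ∑ i, γ i * adjugate (-L) i i := by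
    simp only [adjugate_neg_apply_self, mul_sum, mul_left_comm]
  have hpos : 0 < (-1 : ℝ) ^ n * ∑ i, γ i * cofactor L i i := by
    rw [hsum]
    refine sum_pos (fun i _ => mul_pos (hγ i) ?_) univ_nonempty
    rw [adjugate_apply_self]
    exact det_submatrix_succAbove_pos hess hirr hcol i
  have htop := coeff_det_X_add_C_card (-L) (diagonal γ)
  rw [Fintype.card_fin, det_neg, det_eq_zero_of_sum_col_eq_zero hcol, mul_zero] at htop
  have hsubtop := coeff_det_X_add_C_card_sub_one (-L) (diagonal γ)
  simp only [Fintype.card_fin, Nat.add_sub_cancel, det_updateCol_diagonal, ← hsum] at hsubtop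
  have hdeg := natDegree_det_X_add_C_le (-L) (diagonal γ)
  rw [Fintype.card_fin] at hdeg
  refine ⟨_, fun d => ?_, htop, hsubtop, hpos, ?_⟩
  · rw [eval_det_X_smul_add_C, smul_neg, neg_add_eq_sub]
  · exact degree_eq_of_le_of_coeff_ne_zero
      (natDegree_le_iff_degree_le.1 (natDegree_le_pred hdeg htop)) (hsubtop ▸ hpos.ne')

/-- For an essentially nonnegative, irreducible `L` of size `n+1` with zero column
sums and `D = diag(γ)` with `γ_i > 0`, the function `d ↦ det(D − d·L)` is a polynomial in `d`
whose leading (degree `n+1`) coefficient is zero and whose degree-`n` coefficient equals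
`(-1)^n·Σ γ_i·C_{ii} > 0`; in particular the polynomial has degree exactly `n`. -/
theorem det_V_polynomial {n : ℕ} (hn : 1 ≤ n)
    (L : Matrix (Fin (n+1)) (Fin (n+1)) ℝ)
    (hess : ∀ i j, i ≠ j → 0 ≤ L i j)
    (hirr : IsIrreducibleMatrix L)
    (hcol : ∀ j, ∑ i, L i j = 0)
    (γ : Fin (n+1) → ℝ) (hγ : ∀ i, 0 < γ i) :
    ∃ p : Polynomial ℝ,
      (∀ d : ℝ, (Matrix.diagonal γ - d • L).det = p.eval d) ∧
      p.coeff (n+1) = 0 ∧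
      p.coeff n = (-1 : ℝ) ^ n * ∑ i, γ i * cofactor L i i ∧
      0 < (-1 : ℝ) ^ n * ∑ i, γ i * cofactor L i i ∧
      p.degree = n :=
  det_V_polynomial_general L hess hirr hcol γ hγ
end
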